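/- The curves F₁: w² = z(z−1)(z+3) and F₂: y⁴ − u²(6y−4)y + u⁴(4y−3) = 0 are birationally related: if (z,w) lies on F₁ with z ≠ 0, then y = −w²/(4z) and u = (1/4)(1 − z⁻¹)w satisfy F₂; conversely, if (y,u) lies on F₂ with y ≠ 0, y ≠ 1, u(u²−1) ≠ 0, then z = 2 − 3u²/y − (u²−1)/(y−1) and w = ((5y−3)u² − y³ − y²)/(u(u²−1)) satisfy F₁, and these maps are mutually inverse where defined. -/

import Mathlib

/-!
Both maps are governed by three incidence relations between `(z, w)` and `(y, u)`:
`4y = -(z - 1)(z + 3)`, `w² = -4yz` and `4zu = (z - 1)w`. They are the map `F₁ → F₂` with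
denominators cleared (the first one uses the cubic to rewrite `y`), and conversely, once `z` and
`w` are given by the inverse formulas, each relation times its denominator is a multiple of the
quartic. The relations give the cubic at once; they give the quartic and the inverse formulas
after eliminating `u²` and `uw` through `4zu² = -y(z - 1)²` and `uw = -y(z - 1)`, which leaves
multiples of `4y + (z - 1)(z + 3)`.
-/

structure CurveCorrespondence {K : Type*} [Field K] (z w y u : K) : Prop where
  four_mul_y : 4 * y = -((z - 1) * (z + 3))
  w_sq : w ^ 2 = -(4 * y * z)
  four_mul_z_mul_u : 4 * z * u = (z - 1) * w

namespace CurveCorrespondence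

variable {K : Type*} [Field K] {z w y u : K}

theorem w_sq_eq_cubic (h : CurveCorrespondence z w y u) : w ^ 2 = z * (z - 1) * (z + 3) := by
  linear_combination h.w_sq - z * h.four_mul_y

section

variable (h4 : (4 : K) ≠ 0) (hz : z ≠ 0)
include h4 hz

theorem four_mul_z_mul_u_sq (h : CurveCorrespondence z w y u) :
    4 * z * u ^ 2 = -(y * (z - 1) ^ 2) :=
  mul_left_cancel₀ (mul_ne_zero h4 hz) <| by
    linear_combination (4 * z * u + (z - 1) * w) * h.four_mul_z_mul_u + (z - 1) ^ 2 * h.w_sq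

theorem u_mul_w (h : CurveCorrespondence z w y u) : u * w = -(y * (z - 1)) :=
  mul_left_cancel₀ (mul_ne_zero h4 hz) <| by
    linear_combination w * h.four_mul_z_mul_u + (z - 1) * h.w_sq

theorem quartic_eq_zero (h : CurveCorrespondence z w y u) :
    y ^ 4 - u ^ 2 * (6 * y - 4) * y + u ^ 4 * (4 * y - 3) = 0 := by
  have hu := h.four_mul_z_mul_u_sq h4 hz
  have hscaled : (4 * z) ^ 2 * (y ^ 4 - u ^ 2 * (6 * y - 4) * y + u ^ 4 * (4 * y - 3)) = 0 := by
    linear_combination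
      (-4 * z * (6 * y - 4) * y + (4 * z * u ^ 2 - y * (z - 1) ^ 2) * (4 * y - 3)) * hu
        + y ^ 2 * (4 * y * z ^ 2 - 3 * z ^ 2 + 2 * z + 1) * h.four_mul_y
  exact (mul_eq_zero.mp hscaled).resolve_left (pow_ne_zero 2 (mul_ne_zero h4 hz))

theorem z_eq (h : CurveCorrespondence z w y u) (hy₀ : y ≠ 0) (hy₁ : y ≠ 1) :
    z = 2 - 3 * u ^ 2 / y - (u ^ 2 - 1) / (y - 1) := by
  have hzy : z * (y * (y - 1)) = 2 * y * (y - 1) - 3 * u ^ 2 * (y - 1) - (u ^ 2 - 1) * y :=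
    mul_left_cancel₀ (mul_ne_zero h4 hz) <| by
      linear_combination (4 * y - 3) * h.four_mul_z_mul_u_sq h4 hz - y * h.four_mul_y
  have hy₁' : y - 1 ≠ 0 := sub_ne_zero.mpr hy₁
  field_simp
  linear_combination hzy

theorem w_eq (h : CurveCorrespondence z w y u) (hu : u * (u ^ 2 - 1) ≠ 0) :
    w = ((5 * y - 3) * u ^ 2 - y ^ 3 - y ^ 2) / (u * (u ^ 2 - 1)) := by
  have hwu : w * (u * (u ^ 2 - 1)) = (5 * y - 3) * u ^ 2 - y ^ 3 - y ^ 2 :=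
    mul_left_cancel₀ (mul_ne_zero h4 hz) <| by
      linear_combination (-(y * (z - 1)) - (5 * y - 3)) * h.four_mul_z_mul_u_sq h4 hz
        + (4 * z * u ^ 2 - 4 * z) * h.u_mul_w h4 hz + (y ^ 2 * z + y) * h.four_mul_y
  rw [eq_div_iff hu]
  exact hwu

theorem y_eq (h : CurveCorrespondence z w y u) : y = -(w ^ 2) / (4 * z) := by
  rw [eq_div_iff (mul_ne_zero h4 hz)]
  linear_combination h.w_sq

theorem u_eq (h : CurveCorrespondence z w y u) : u = (1 / 4) * (1 - z⁻¹) * w := by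
  field_simp
  linear_combination h.four_mul_z_mul_u

theorem of_cubic (hw : w ^ 2 = z * (z - 1) * (z + 3)) (hy : y = -(w ^ 2) / (4 * z))
    (hu : u = (1 / 4) * (1 - z⁻¹) * w) : CurveCorrespondence z w y u where
  four_mul_y := by rw [hy, hw]; field_simp
  w_sq := by rw [hy]; field_simp
  four_mul_z_mul_u := by rw [hu]; field_simp

end

theorem of_quartic (hF : y ^ 4 - u ^ 2 * (6 * y - 4) * y + u ^ 4 * (4 * y - 3) = 0)
    (hy₀ : y ≠ 0) (hy₁ : y ≠ 1) (hu : u * (u ^ 2 - 1) ≠ 0)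
    (hz : z = 2 - 3 * u ^ 2 / y - (u ^ 2 - 1) / (y - 1))
    (hw : w = ((5 * y - 3) * u ^ 2 - y ^ 3 - y ^ 2) / (u * (u ^ 2 - 1))) :
    CurveCorrespondence z w y u := by
  have hD : y * (y - 1) ≠ 0 := mul_ne_zero hy₀ (sub_ne_zero.mpr hy₁)
  have hzD : z * (y * (y - 1)) = 2 * y * (y - 1) - 3 * u ^ 2 * (y - 1) - (u ^ 2 - 1) * y := by
    rw [hz]; field_simp
  have hwU : w * (u * (u ^ 2 - 1)) = (5 * y - 3) * u ^ 2 - y ^ 3 - y ^ 2 := by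
    rw [hw]; exact div_mul_cancel₀ _ hu
  set D := y * (y - 1)
  set U := u * (u ^ 2 - 1)
  set Z := 2 * y * (y - 1) - 3 * u ^ 2 * (y - 1) - (u ^ 2 - 1) * y
  set W := (5 * y - 3) * u ^ 2 - y ^ 3 - y ^ 2
  refine ⟨mul_left_cancel₀ (pow_ne_zero 2 hD) ?_,
    mul_left_cancel₀ (mul_ne_zero hD (pow_ne_zero 2 hu)) ?_, mul_left_cancel₀ (mul_ne_zero hD hu) ?_⟩
  · linear_combination (z * D + Z + 2 * D) * hzD + (4 * y - 3) * hF
  · linear_combination D * (w * U + W) * hwU + 4 * y * U ^ 2 * hzD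
      + (-4 * y * u ^ 4 - 4 * y ^ 2 * u ^ 2 + y ^ 4 + 8 * y * u ^ 2 + y ^ 3 - y ^ 2 - y) * hF
  · linear_combination (4 * u * U - W) * hzD - (z * D - D) * hwU + (y + 1 - 4 * u ^ 2) * hF

end CurveCorrespondence

theorem torus_birational :
    (∀ z w : ℂ, z ≠ 0 → w ^ 2 = z * (z - 1) * (z + 3) →
      ∀ y u : ℂ, y = -(w ^ 2) / (4 * z) → u = (1 / 4) * (1 - z⁻¹) * w →
        (y ^ 4 - u ^ 2 * (6 * y - 4) * y + u ^ 4 * (4 * y - 3) = 0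
          ∧ (y ≠ 0 → y ≠ 1 → u * (u ^ 2 - 1) ≠ 0 →
              z = 2 - 3 * u ^ 2 / y - (u ^ 2 - 1) / (y - 1)
                ∧ w = ((5 * y - 3) * u ^ 2 - y ^ 3 - y ^ 2) / (u * (u ^ 2 - 1)))))
    ∧
    (∀ y u : ℂ, y ^ 4 - u ^ 2 * (6 * y - 4) * y + u ^ 4 * (4 * y - 3) = 0 →
      y ≠ 0 → y ≠ 1 → u * (u ^ 2 - 1) ≠ 0 →
      ∀ z w : ℂ, z = 2 - 3 * u ^ 2 / y - (u ^ 2 - 1) / (y - 1) →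
        w = ((5 * y - 3) * u ^ 2 - y ^ 3 - y ^ 2) / (u * (u ^ 2 - 1)) →
        (w ^ 2 = z * (z - 1) * (z + 3)
          ∧ (z ≠ 0 → y = -(w ^ 2) / (4 * z) ∧ u = (1 / 4) * (1 - z⁻¹) * w))) := by
  have h4 : (4 : ℂ) ≠ 0 := by norm_num
  constructor
  · intro z w hz hw y u hy hu
    have h := CurveCorrespondence.of_cubic h4 hz hw hy hu
    exact ⟨h.quartic_eq_zero h4 hz, fun hy₀ hy₁ hu₀ => ⟨h.z_eq h4 hz hy₀ hy₁, h.w_eq h4 hz hu₀⟩⟩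
  · intro y u hF hy₀ hy₁ hu₀ z w hz hw
    have h := CurveCorrespondence.of_quartic hF hy₀ hy₁ hu₀ hz hw
    exact ⟨h.w_sq_eq_cubic, fun hz₀ => ⟨h.y_eq h4 hz₀, h.u_eq h4 hz₀⟩⟩
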